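/- Let x ∈ ℂ with x ≠ 0, and suppose x is neither an eigenvalue of Q₁ nor an eigenvalue of Q̂₁, and let w ∈ ℂ satisfy w² = x. Then the 2N×2N matrix Ĥ(x) − x·I_{2N} with Ĥ(x) = [[0, w·Ŷ],[w·Ŷᴴ, 0]] is invertible, the (r+s)×(r+s) matrix 𝒟⁻¹ + x·𝐔ᴴ·G(x)·𝐔 is invertible, and, writing Ĝ(x) = (Ĥ(x) − x·I_{2N})⁻¹, one has 𝐔ᴴ·Ĝ(x)·𝐔 = x⁻¹·(I − 𝒟)^{1/2}·[𝒟⁻¹ − 𝒟⁻¹·(𝒟⁻¹ + x·𝐔ᴴ·G(x)·𝐔)⁻¹·𝒟⁻¹]·(I − 𝒟)^{1/2}, where (I − 𝒟)^{1/2} is the diagonal matrix with entries (1+d_i^a)^{−1/2} for i = 1,…,r followed by (1+d_j^b)^{−1/2} for j = 1,…,s. -/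

import Mathlib

/-! With `P = diag((1 + d)^{1/2})` one has `Ŷ = P_a Y P_b` and `P (I - 𝐔𝒟𝐔ᴴ) P = I`, hence
`Ĥ(x) - x = P (H(x) - x + x 𝐔𝒟𝐔ᴴ) P`. Reading the Woodbury identity backwards, the capacitance
matrix `𝒟⁻¹ + x 𝐔ᴴ G(x) 𝐔` has the explicit inverse `𝒟 - x 𝒟 𝐔ᴴ (H(x) - x + x 𝐔𝒟𝐔ᴴ)⁻¹ 𝐔 𝒟`,
and `P⁻¹ 𝐔 = 𝐔 (I - 𝒟)^{1/2}` turns `𝐔ᴴ Ĝ(x) 𝐔` into the claimed expression. Invertibility of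
`H(x) - x` holds because its Schur complement is `Y Yᴴ - x`. -/

open Matrix

noncomputable section

/-- Spiked diagonal entries: `â_k = a_k (1 + d_k)` for `k < r` (0-indexed) and
`â_k = a_k` otherwise. -/
def hatEntries (N r : ℕ) (a d : Fin N → ℝ) : Fin N → ℝ :=
  fun k => if (k : ℕ) < r then a k * (1 + d k) else a k

/-- The diagonal matrix `A^{1/2}` with entries `√(a_i)`. -/
def sqrtDiag (N : ℕ) (a : Fin N → ℝ) : Matrix (Fin N) (Fin N) ℂ :=
  Matrix.diagonal fun i => ((Real.sqrt (a i) : ℝ) : ℂ)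

/-- `Y = A^{1/2} U B^{1/2}`. -/
def Ymat (N : ℕ) (a b : Fin N → ℝ) (U : Matrix (Fin N) (Fin N) ℂ) :
    Matrix (Fin N) (Fin N) ℂ :=
  sqrtDiag N a * U * sqrtDiag N b

/-- The linearization `H(x) = [[0, w·Y],[w·Yᴴ, 0]]`, where `w² = x`. -/
def Hlin (N : ℕ) (Y : Matrix (Fin N) (Fin N) ℂ) (w : ℂ) :
    Matrix (Fin N ⊕ Fin N) (Fin N ⊕ Fin N) ℂ :=
  Matrix.fromBlocks 0 (w • Y) (w • Yᴴ) 0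

/-- The `2N × (r+s)` matrix `𝐔` whose columns are `e₁,…,e_r` and `e_{N+1},…,e_{N+s}`. -/
def Umat (N r s : ℕ) : Matrix (Fin N ⊕ Fin N) (Fin r ⊕ Fin s) ℂ :=
  Matrix.fromBlocks (fun i i' => if (i : ℕ) = (i' : ℕ) then 1 else 0) 0 0
    (fun j j' => if (j : ℕ) = (j' : ℕ) then 1 else 0)

/-- The `(r+s) × (r+s)` diagonal matrix `𝒟` with entries `d_i^a/(1+d_i^a)` and
`d_j^b/(1+d_j^b)`. -/
def Dmat (N r s : ℕ) (hr : r ≤ N) (hs : s ≤ N) (da db : Fin N → ℝ) :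
    Matrix (Fin r ⊕ Fin s) (Fin r ⊕ Fin s) ℂ :=
  Matrix.diagonal (Sum.elim
    (fun i : Fin r =>
      ((da (Fin.castLE hr i) / (1 + da (Fin.castLE hr i)) : ℝ) : ℂ))
    (fun j : Fin s =>
      ((db (Fin.castLE hs j) / (1 + db (Fin.castLE hs j)) : ℝ) : ℂ)))

/-- The `2N × 2N` diagonal matrix `P` with entries `(1+d_i^a)^{1/2}` (`i < r`), `1`
(`r ≤ i < N`), `(1+d_j^b)^{1/2}` (`j < s`), `1` (`s ≤ j < N`). -/
def Pmat (N r s : ℕ) (da db : Fin N → ℝ) :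
    Matrix (Fin N ⊕ Fin N) (Fin N ⊕ Fin N) ℂ :=
  Matrix.diagonal (Sum.elim
    (fun i : Fin N =>
      ((Real.sqrt (1 + if (i : ℕ) < r then da i else 0) : ℝ) : ℂ))
    (fun j : Fin N =>
      ((Real.sqrt (1 + if (j : ℕ) < s then db j else 0) : ℝ) : ℂ)))

/-- The `(r+s) × (r+s)` diagonal matrix `(I − 𝒟)^{1/2}` with entries `(1+d_i^a)^{-1/2}`
and `(1+d_j^b)^{-1/2}`. -/
def Emat (N r s : ℕ) (hr : r ≤ N) (hs : s ≤ N) (da db : Fin N → ℝ) :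
    Matrix (Fin r ⊕ Fin s) (Fin r ⊕ Fin s) ℂ :=
  Matrix.diagonal (Sum.elim
    (fun i : Fin r => (((Real.sqrt (1 + da (Fin.castLE hr i)))⁻¹ : ℝ) : ℂ))
    (fun j : Fin s => (((Real.sqrt (1 + db (Fin.castLE hs j)))⁻¹ : ℝ) : ℂ)))

theorem isUnit_fromBlocks_neg_smul_one {m n : Type*} [Fintype m] [Fintype n]
    [DecidableEq m] [DecidableEq n] {K : Type*} [Field K]
    (Y : Matrix m n K) (Z : Matrix n m K) {x w : K} (hx : x ≠ 0) (hw : w ^ 2 = x)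
    (hev : ∀ v : m → K, (Y * Z) *ᵥ v = x • v → v = 0) :
    IsUnit (fromBlocks (-(x • 1)) (w • Y) (w • Z) (-(x • 1))) := by
  let : Invertible (-(x • 1) : Matrix n n K) :=
    invertibleOfLeftInverse _ (-(x⁻¹ • 1)) (by simp [smul_smul, hx])
  have hschur : -(x • 1) - w • Y * ⅟(-(x • 1) : Matrix n n K) * (w • Z) = Y * Z - x • 1 := by
    change _ - w • Y * (-(x⁻¹ • 1)) * (w • Z) = _
    have : w * x⁻¹ * w = 1 := by rw [← hw, mul_right_comm, ← sq, mul_inv_cancel₀ (hw ▸ hx)]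
    simp only [Matrix.mul_neg, Matrix.neg_mul, Matrix.mul_smul, Matrix.smul_mul, smul_neg, smul_smul,
      Matrix.mul_one, ← mul_assoc, this, one_smul]
    abel
  rw [isUnit_iff_isUnit_det, det_fromBlocks₂₂, hschur, isUnit_iff_ne_zero]
  refine mul_ne_zero (isUnit_det_of_invertible _).ne_zero fun hdet => ?_
  obtain ⟨v, hv, hker⟩ := exists_mulVec_eq_zero_iff.mpr hdet
  exact hv (hev v (by rwa [sub_mulVec, sub_eq_zero, smul_mulVec, one_mulVec] at hker))

theorem isUnit_Hlin_sub_smul_one {N : ℕ} (Y : Matrix (Fin N) (Fin N) ℂ) {x w : ℂ} (hx : x ≠ 0)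
    (hw : w ^ 2 = x) (hev : ∀ v : Fin N → ℂ, (Y * Yᴴ) *ᵥ v = x • v → v = 0) :
    IsUnit (Hlin N Y w - x • 1) := by
  rw [Hlin, ← fromBlocks_one, fromBlocks_smul, sub_eq_add_neg, fromBlocks_neg, fromBlocks_add]
  simpa using isUnit_fromBlocks_neg_smul_one Y Yᴴ hx hw hev

theorem capacitance_mul_eq_one {R : Type*} [CommRing R] {n m : Type*} [Fintype n] [Fintype m]
    [DecidableEq n] [DecidableEq m] (M : Matrix n n R) (U : Matrix n m R) (V : Matrix m n R)
    (D : Matrix m m R) (x : R) (hM : IsUnit M) (hN : IsUnit (M + x • (U * D * V)))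
    (hD : IsUnit D) :
    (D⁻¹ + x • (V * M⁻¹ * U)) * (D - x • (D * (V * (M + x • (U * D * V))⁻¹ * U) * D)) = 1 := by
  set N := M + x • (U * D * V)
  rw [isUnit_iff_isUnit_det] at hM hN hD
  -- push-through: `x U D V = N - M`
  have hpush : x • (V * M⁻¹ * U * D * (V * N⁻¹ * U)) = V * M⁻¹ * U - V * N⁻¹ * U := by
    calc x • (V * M⁻¹ * U * D * (V * N⁻¹ * U)) = V * M⁻¹ * (N - M) * N⁻¹ * U := by
          simp only [N, add_sub_cancel_left, Matrix.mul_smul, Matrix.smul_mul, Matrix.mul_assoc]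
      _ = V * M⁻¹ * U - V * N⁻¹ * U := by
          rw [Matrix.mul_sub, Matrix.sub_mul, Matrix.sub_mul, mul_nonsing_inv_cancel_right _ _ hN,
            nonsing_inv_mul_cancel_right _ _ hM]
  generalize V * M⁻¹ * U = G at hpush ⊢
  generalize V * N⁻¹ * U = W at hpush ⊢
  calc (D⁻¹ + x • G) * (D - x • (D * W * D))
      = D⁻¹ * D - x • (D⁻¹ * D * W * D) + x • (G * D) - x • (x • (G * D * W)) * D := by
        simp only [add_mul, mul_sub, mul_smul_comm, smul_mul_assoc, ← mul_assoc]
        module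
    _ = 1 := by
        rw [hpush, nonsing_inv_mul _ hD, Matrix.one_mul, smul_mul_assoc, sub_mul]
        module

theorem inv_sub_inv_mul_capacitance_inv_mul_inv {R : Type*} [CommRing R] {n m : Type*}
    [Fintype n] [Fintype m] [DecidableEq n] [DecidableEq m] (M : Matrix n n R)
    (U : Matrix n m R) (V : Matrix m n R) (D : Matrix m m R) (x : R) (hM : IsUnit M)
    (hN : IsUnit (M + x • (U * D * V))) (hD : IsUnit D) :
    D⁻¹ - D⁻¹ * (D⁻¹ + x • (V * M⁻¹ * U))⁻¹ * D⁻¹ = x • (V * (M + x • (U * D * V))⁻¹ * U) := by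
  rw [inv_eq_right_inv (capacitance_mul_eq_one M U V D x hM hN hD), isUnit_iff_isUnit_det] at *
  simp only [Matrix.mul_sub, Matrix.sub_mul, Matrix.mul_smul, Matrix.smul_mul, ← Matrix.mul_assoc,
    nonsing_inv_mul _ hD, Matrix.one_mul, mul_nonsing_inv_cancel_right _ _ hD, sub_sub_cancel]

def inclMatrix (N r : ℕ) : Matrix (Fin N) (Fin r) ℂ :=
  of fun i k => if (i : ℕ) = k then 1 else 0

theorem Umat_eq_fromBlocks (N r s : ℕ) :
    Umat N r s = fromBlocks (inclMatrix N r) 0 0 (inclMatrix N s) := rfl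

theorem inclMatrix_apply_castLE {N r : ℕ} (hr : r ≤ N) (i : Fin N) (k : Fin r) :
    inclMatrix N r i k = if i = Fin.castLE hr k then 1 else 0 := by
  simp [inclMatrix, Fin.ext_iff]

theorem inclMatrix_mul_diagonal_mul_conjTranspose {N r : ℕ} (hr : r ≤ N) (c : Fin r → ℂ) :
    inclMatrix N r * diagonal c * (inclMatrix N r)ᴴ =
      diagonal fun i : Fin N => if h : (i : ℕ) < r then c ⟨i, h⟩ else 0 := by
  ext i j
  simp only [mul_apply, inclMatrix_apply_castLE hr, diagonal_apply, mul_ite, ite_mul, one_mul,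
    zero_mul, mul_zero, Finset.sum_ite_eq', Finset.mem_univ, ↓reduceIte, conjTranspose_apply,
    RCLike.star_def, MonoidWithZeroHom.map_ite_one_zero, mul_one]
  by_cases hi : (i : ℕ) < r
  · obtain ⟨k, rfl⟩ : ∃ k, i = Fin.castLE hr k := ⟨⟨i, hi⟩, rfl⟩
    by_cases hj : j = Fin.castLE hr k
    · subst hj
      simp [(Fin.castLE_injective hr).eq_iff]
    · simp only [(Fin.castLE_injective hr).eq_iff, Ne.symm hj, if_false]
      refine Finset.sum_eq_zero fun x _ => ?_
      split_ifs with hjx hkx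
      · exact absurd (hkx ▸ hjx) hj
      all_goals rfl
  · have : ∀ k, i ≠ Fin.castLE hr k := fun k h => hi (h ▸ k.isLt)
    simp [this, hi]

def spike {N : ℕ} (r : ℕ) (d : Fin N → ℝ) : Fin N → ℝ :=
  fun i => if (i : ℕ) < r then d i else 0

theorem one_add_spike_pos {N r : ℕ} {d : Fin N → ℝ} (hd : ∀ i : Fin N, (i : ℕ) < r → -1 < d i)
    (i : Fin N) : 0 < 1 + spike r d i := by
  unfold spike
  split_ifs with hi
  · linarith [hd i hi]
  · norm_num

theorem hatEntries_eq_mul_one_add_spike (N r : ℕ) (a d : Fin N → ℝ) :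
    hatEntries N r a d = fun i => a i * (1 + spike r d i) := by
  ext i
  unfold hatEntries spike
  split_ifs <;> simp

theorem sqrtDiag_mul {N : ℕ} (a b : Fin N → ℝ) (hb : ∀ i, 0 ≤ b i) :
    sqrtDiag N (fun i => a i * b i) = sqrtDiag N a * sqrtDiag N b := by
  simp [sqrtDiag, diagonal_mul_diagonal, Real.sqrt_mul' _ (hb _)]

theorem conjTranspose_sqrtDiag {N : ℕ} (a : Fin N → ℝ) : (sqrtDiag N a)ᴴ = sqrtDiag N a := by
  simp [sqrtDiag, diagonal_conjTranspose]

theorem Ymat_hatEntries {N r s : ℕ} (a b da db : Fin N → ℝ) (U : Matrix (Fin N) (Fin N) ℂ)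
    (hda : ∀ i : Fin N, (i : ℕ) < r → -1 < da i) (hdb : ∀ j : Fin N, (j : ℕ) < s → -1 < db j) :
    Ymat N (hatEntries N r a da) (hatEntries N s b db) U =
      sqrtDiag N (fun i => 1 + spike r da i) * Ymat N a b U *
        sqrtDiag N (fun j => 1 + spike s db j) := by
  simp only [Ymat, hatEntries_eq_mul_one_add_spike,
    sqrtDiag_mul _ _ fun i => (one_add_spike_pos hda i).le,
    sqrtDiag_mul _ _ fun j => (one_add_spike_pos hdb j).le]
  rw [show sqrtDiag N a * sqrtDiag N _ = _ from (commute_diagonal _ _).eq]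
  simp only [Matrix.mul_assoc]
  rfl

theorem Pmat_eq_fromBlocks (N r s : ℕ) (da db : Fin N → ℝ) :
    Pmat N r s da db = fromBlocks (sqrtDiag N fun i => 1 + spike r da i) 0 0
      (sqrtDiag N fun j => 1 + spike s db j) := by
  rw [sqrtDiag, sqrtDiag, fromBlocks_diagonal]
  rfl

theorem Emat_eq_fromBlocks (N r s : ℕ) (hr : r ≤ N) (hs : s ≤ N) (da db : Fin N → ℝ) :
    Emat N r s hr hs da db =
      fromBlocks (diagonal fun i : Fin r => (((√(1 + da (Fin.castLE hr i)))⁻¹ : ℝ) : ℂ)) 0 0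
        (diagonal fun j : Fin s => (((√(1 + db (Fin.castLE hs j)))⁻¹ : ℝ) : ℂ)) := by
  rw [fromBlocks_diagonal]
  rfl

theorem Dmat_eq_fromBlocks (N r s : ℕ) (hr : r ≤ N) (hs : s ≤ N) (da db : Fin N → ℝ) :
    Dmat N r s hr hs da db =
      fromBlocks (diagonal fun i : Fin r =>
          ((da (Fin.castLE hr i) / (1 + da (Fin.castLE hr i)) : ℝ) : ℂ)) 0 0
        (diagonal fun j : Fin s =>
          ((db (Fin.castLE hs j) / (1 + db (Fin.castLE hs j)) : ℝ) : ℂ)) := by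
  rw [fromBlocks_diagonal]
  rfl

theorem fromBlocks_mul_Hlin_mul_fromBlocks {N : ℕ} (Y A B : Matrix (Fin N) (Fin N) ℂ) (w : ℂ)
    (hA : Aᴴ = A) (hB : Bᴴ = B) :
    fromBlocks A 0 0 B * Hlin N Y w * fromBlocks A 0 0 B = Hlin N (A * Y * B) w := by
  simp [Hlin, fromBlocks_multiply, conjTranspose_mul, hA, hB, Matrix.mul_assoc]

theorem Umat_mul_Dmat_mul_conjTranspose (N r s : ℕ) (hr : r ≤ N) (hs : s ≤ N)
    (da db : Fin N → ℝ) :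
    Umat N r s * Dmat N r s hr hs da db * (Umat N r s)ᴴ =
      fromBlocks (diagonal fun i => ((spike r da i / (1 + spike r da i) : ℝ) : ℂ)) 0 0
        (diagonal fun j => ((spike s db j / (1 + spike s db j) : ℝ) : ℂ)) := by
  rw [Umat_eq_fromBlocks, Dmat_eq_fromBlocks, fromBlocks_conjTranspose]
  simp only [fromBlocks_multiply, conjTranspose_zero, Matrix.mul_zero, Matrix.zero_mul,
    add_zero, zero_add, inclMatrix_mul_diagonal_mul_conjTranspose hr,
    inclMatrix_mul_diagonal_mul_conjTranspose hs]
  congr <;> ext i <;> simp only [spike] <;> split_ifs <;> simp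

theorem Pmat_mul_one_sub_mul_Pmat (N r s : ℕ) (hr : r ≤ N) (hs : s ≤ N) (da db : Fin N → ℝ)
    (hda : ∀ i : Fin N, (i : ℕ) < r → -1 < da i) (hdb : ∀ j : Fin N, (j : ℕ) < s → -1 < db j) :
    Pmat N r s da db * (1 - Umat N r s * Dmat N r s hr hs da db * (Umat N r s)ᴴ) *
      Pmat N r s da db = 1 := by
  have hscalar : ∀ t : ℝ, 0 < 1 + t → ((√(1 + t) : ℝ) : ℂ) * (1 - ((t / (1 + t) : ℝ) : ℂ)) *
      ((√(1 + t) : ℝ) : ℂ) = 1 := by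
    intro t ht
    have hsq : √(1 + t) * √(1 + t) = 1 + t := Real.mul_self_sqrt ht.le
    have : √(1 + t) * (1 - t / (1 + t)) * √(1 + t) = 1 := by
      rw [mul_right_comm, hsq]; field_simp; ring
    exact_mod_cast this
  rw [Umat_mul_Dmat_mul_conjTranspose, Pmat, fromBlocks_diagonal, ← diagonal_one,
    diagonal_sub, diagonal_mul_diagonal, diagonal_mul_diagonal]
  congr 1
  ext (i | j)
  · exact hscalar _ (one_add_spike_pos hda i)
  · exact hscalar _ (one_add_spike_pos hdb j)

theorem Hlin_hatEntries_sub_smul_one (N r s : ℕ) (hr : r ≤ N) (hs : s ≤ N)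
    (a b da db : Fin N → ℝ) (hda : ∀ i : Fin N, (i : ℕ) < r → -1 < da i)
    (hdb : ∀ j : Fin N, (j : ℕ) < s → -1 < db j) (U : Matrix (Fin N) (Fin N) ℂ) (x w : ℂ) :
    Hlin N (Ymat N (hatEntries N r a da) (hatEntries N s b db) U) w - x • 1 =
      Pmat N r s da db * (Hlin N (Ymat N a b U) w - x • 1 +
        x • (Umat N r s * Dmat N r s hr hs da db * (Umat N r s)ᴴ)) * Pmat N r s da db := by
  rw [show ∀ H C : Matrix (Fin N ⊕ Fin N) (Fin N ⊕ Fin N) ℂ, H - x • 1 + x • C = H - x • (1 - C)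
      from fun H C => by rw [smul_sub]; abel, Matrix.mul_sub, Matrix.sub_mul, Matrix.mul_smul,
    Matrix.smul_mul, Pmat_mul_one_sub_mul_Pmat N r s hr hs da db hda hdb, Pmat_eq_fromBlocks,
    fromBlocks_mul_Hlin_mul_fromBlocks _ _ _ _ (conjTranspose_sqrtDiag _)
      (conjTranspose_sqrtDiag _), Ymat_hatEntries a b da db U hda hdb]

theorem sqrtDiag_mul_inclMatrix_mul_diagonal {N r : ℕ} (hr : r ≤ N) (d : Fin N → ℝ)
    (hd : ∀ i : Fin N, (i : ℕ) < r → -1 < d i) :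
    sqrtDiag N (fun i => 1 + spike r d i) * inclMatrix N r *
        diagonal (fun k => (((√(1 + d (Fin.castLE hr k)))⁻¹ : ℝ) : ℂ)) = inclMatrix N r := by
  ext i k
  simp only [sqrtDiag, diagonal_mul, mul_diagonal, inclMatrix_apply_castLE hr]
  split_ifs with hik
  · subst hik
    have hk : ((Fin.castLE hr k : Fin N) : ℕ) < r := k.isLt
    have hpos : 0 < √(1 + d (Fin.castLE hr k)) := Real.sqrt_pos.mpr (by linarith [hd _ hk])
    simp only [spike, hk, if_true, mul_one, ← Complex.ofReal_mul, mul_inv_cancel₀ hpos.ne',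
      Complex.ofReal_one]
  · simp

theorem Pmat_mul_Umat_mul_Emat (N r s : ℕ) (hr : r ≤ N) (hs : s ≤ N) (da db : Fin N → ℝ)
    (hda : ∀ i : Fin N, (i : ℕ) < r → -1 < da i) (hdb : ∀ j : Fin N, (j : ℕ) < s → -1 < db j) :
    Pmat N r s da db * Umat N r s * Emat N r s hr hs da db = Umat N r s := by
  rw [Pmat_eq_fromBlocks, Umat_eq_fromBlocks, Emat_eq_fromBlocks]
  simp only [fromBlocks_multiply, Matrix.mul_zero, Matrix.zero_mul, add_zero, zero_add,
    sqrtDiag_mul_inclMatrix_mul_diagonal hr da hda, sqrtDiag_mul_inclMatrix_mul_diagonal hs db hdb]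

theorem isUnit_Pmat (N r s : ℕ) (da db : Fin N → ℝ)
    (hda : ∀ i : Fin N, (i : ℕ) < r → -1 < da i) (hdb : ∀ j : Fin N, (j : ℕ) < s → -1 < db j) :
    IsUnit (Pmat N r s da db) := by
  rw [Pmat, isUnit_diagonal, Pi.isUnit_iff]
  rintro (i | j) <;> refine isUnit_iff_ne_zero.mpr (Complex.ofReal_ne_zero.mpr ?_)
  · exact (Real.sqrt_pos.mpr (one_add_spike_pos hda i)).ne'
  · exact (Real.sqrt_pos.mpr (one_add_spike_pos hdb j)).ne'

theorem isUnit_Dmat (N r s : ℕ) (hr : r ≤ N) (hs : s ≤ N) (da db : Fin N → ℝ)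
    (hda : ∀ i : Fin N, (i : ℕ) < r → 0 < da i) (hdb : ∀ j : Fin N, (j : ℕ) < s → 0 < db j) :
    IsUnit (Dmat N r s hr hs da db) := by
  have hquot : ∀ t : ℝ, 0 < t → ((t / (1 + t) : ℝ) : ℂ) ≠ 0 := fun t ht =>
    Complex.ofReal_ne_zero.mpr (div_pos ht (by linarith)).ne'
  rw [Dmat, isUnit_diagonal, Pi.isUnit_iff]
  rintro (i | j) <;> refine isUnit_iff_ne_zero.mpr (hquot _ ?_)
  · exact hda _ i.isLt
  · exact hdb _ j.isLt

theorem conjTranspose_Umat_mul_inv_mul_Umat (N r s : ℕ) (hr : r ≤ N) (hs : s ≤ N)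
    (da db : Fin N → ℝ) (hda : ∀ i : Fin N, (i : ℕ) < r → -1 < da i)
    (hdb : ∀ j : Fin N, (j : ℕ) < s → -1 < db j) (M : Matrix (Fin N ⊕ Fin N) (Fin N ⊕ Fin N) ℂ) :
    (Umat N r s)ᴴ * (Pmat N r s da db * M * Pmat N r s da db)⁻¹ * Umat N r s =
      Emat N r s hr hs da db * ((Umat N r s)ᴴ * M⁻¹ * Umat N r s) * Emat N r s hr hs da db := by
  have hP := (isUnit_iff_isUnit_det _).mp (isUnit_Pmat N r s da db hda hdb)
  have hright : (Pmat N r s da db)⁻¹ * Umat N r s = Umat N r s * Emat N r s hr hs da db := by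
    conv_lhs => rw [← Pmat_mul_Umat_mul_Emat N r s hr hs da db hda hdb]
    rw [Matrix.mul_assoc, nonsing_inv_mul_cancel_left _ _ hP]
  have hleft : (Umat N r s)ᴴ * (Pmat N r s da db)⁻¹ = Emat N r s hr hs da db * (Umat N r s)ᴴ := by
    have hPh : (Pmat N r s da db)ᴴ = Pmat N r s da db := by
      simp [Pmat_eq_fromBlocks, fromBlocks_conjTranspose, conjTranspose_sqrtDiag]
    have hEh : (Emat N r s hr hs da db)ᴴ = Emat N r s hr hs da db := by
      simp [Emat_eq_fromBlocks, diagonal_conjTranspose]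
    simpa [conjTranspose_nonsing_inv, hPh, hEh] using congrArg conjTranspose hright
  simp only [Matrix.mul_inv_rev, ← Matrix.mul_assoc, hleft]
  rw [Matrix.mul_assoc _ (Pmat N r s da db)⁻¹, hright, ← Matrix.mul_assoc]

theorem spiked_resolvent_identity_general (N r s : ℕ)
    (hr : r ≤ N) (hs : s ≤ N)
    (a b da db : Fin N → ℝ)
    (hda : ∀ i : Fin N, (i : ℕ) < r → 0 < da i)
    (hdb : ∀ j : Fin N, (j : ℕ) < s → 0 < db j)
    (U : Matrix (Fin N) (Fin N) ℂ)
    (x w : ℂ) (hx : x ≠ 0) (hw : w ^ 2 = x)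
    (hev : ∀ v : Fin N → ℂ,
      (Ymat N a b U * (Ymat N a b U)ᴴ) *ᵥ v = x • v → v = 0)
    (hev' : ∀ v : Fin N → ℂ,
      (Ymat N (hatEntries N r a da) (hatEntries N s b db) U *
        (Ymat N (hatEntries N r a da) (hatEntries N s b db) U)ᴴ) *ᵥ v = x • v → v = 0) :
    IsUnit (Hlin N (Ymat N (hatEntries N r a da) (hatEntries N s b db) U) w -
        x • (1 : Matrix (Fin N ⊕ Fin N) (Fin N ⊕ Fin N) ℂ)) ∧
    IsUnit ((Dmat N r s hr hs da db)⁻¹ +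
        x • ((Umat N r s)ᴴ *
          (Hlin N (Ymat N a b U) w -
            x • (1 : Matrix (Fin N ⊕ Fin N) (Fin N ⊕ Fin N) ℂ))⁻¹ *
          Umat N r s)) ∧
    (Umat N r s)ᴴ *
        (Hlin N (Ymat N (hatEntries N r a da) (hatEntries N s b db) U) w -
          x • (1 : Matrix (Fin N ⊕ Fin N) (Fin N ⊕ Fin N) ℂ))⁻¹ *
        Umat N r s =
      x⁻¹ • (Emat N r s hr hs da db *
        ((Dmat N r s hr hs da db)⁻¹ -
          (Dmat N r s hr hs da db)⁻¹ *
            ((Dmat N r s hr hs da db)⁻¹ +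
              x • ((Umat N r s)ᴴ *
                (Hlin N (Ymat N a b U) w -
                  x • (1 : Matrix (Fin N ⊕ Fin N) (Fin N ⊕ Fin N) ℂ))⁻¹ *
                Umat N r s))⁻¹ *
            (Dmat N r s hr hs da db)⁻¹) *
        Emat N r s hr hs da db) := by
  have hda' : ∀ i : Fin N, (i : ℕ) < r → -1 < da i := fun i hi => by linarith [hda i hi]
  have hdb' : ∀ j : Fin N, (j : ℕ) < s → -1 < db j := fun j hj => by linarith [hdb j hj]
  have hM := isUnit_Hlin_sub_smul_one (Ymat N a b U) hx hw hev
  have hMhat := isUnit_Hlin_sub_smul_one _ hx hw hev'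
  have hD := isUnit_Dmat N r s hr hs da db hda hdb
  have hP := isUnit_Pmat N r s da db hda' hdb'
  rw [Hlin_hatEntries_sub_smul_one N r s hr hs a b da db hda' hdb'] at hMhat ⊢
  have hN := hP.mul_left_iff.mp (hP.mul_right_iff.mp hMhat)
  refine ⟨hMhat, IsUnit.of_mul_eq_one _ (capacitance_mul_eq_one _ _ _ _ x hM hN hD), ?_⟩
  rw [inv_sub_inv_mul_capacitance_inv_mul_inv _ _ _ _ x hM hN hD,
    conjTranspose_Umat_mul_inv_mul_Umat N r s hr hs da db hda' hdb', Matrix.mul_smul,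
    Matrix.smul_mul, smul_smul, inv_mul_cancel₀ hx, one_smul]

/-- If `x ≠ 0` is neither an eigenvalue of `Q₁` nor of `Q̂₁` and
`w² = x`, then `Ĥ(x) − x·I` and `𝒟⁻¹ + x·𝐔ᴴ·G(x)·𝐔` are invertible and
`𝐔ᴴ·Ĝ(x)·𝐔 = x⁻¹·(I−𝒟)^{1/2}·[𝒟⁻¹ − 𝒟⁻¹·(𝒟⁻¹ + x·𝐔ᴴ·G(x)·𝐔)⁻¹·𝒟⁻¹]·(I−𝒟)^{1/2}`. -/
theorem spiked_resolvent_identity (N r s : ℕ)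
    (hN : 0 < N) (hrpos : 0 < r) (hspos : 0 < s) (hr : r ≤ N) (hs : s ≤ N)
    (a b da db : Fin N → ℝ)
    (ha : ∀ i, 0 < a i) (hb : ∀ i, 0 < b i)
    (hda : ∀ i : Fin N, (i : ℕ) < r → 0 < da i)
    (hdb : ∀ j : Fin N, (j : ℕ) < s → 0 < db j)
    (U : Matrix (Fin N) (Fin N) ℂ) (hU : U ∈ Matrix.unitaryGroup (Fin N) ℂ)
    (x w : ℂ) (hx : x ≠ 0) (hw : w ^ 2 = x)
    (hev : ∀ v : Fin N → ℂ,
      (Ymat N a b U * (Ymat N a b U)ᴴ) *ᵥ v = x • v → v = 0)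
    (hev' : ∀ v : Fin N → ℂ,
      (Ymat N (hatEntries N r a da) (hatEntries N s b db) U *
        (Ymat N (hatEntries N r a da) (hatEntries N s b db) U)ᴴ) *ᵥ v = x • v → v = 0) :
    IsUnit (Hlin N (Ymat N (hatEntries N r a da) (hatEntries N s b db) U) w -
        x • (1 : Matrix (Fin N ⊕ Fin N) (Fin N ⊕ Fin N) ℂ)) ∧
    IsUnit ((Dmat N r s hr hs da db)⁻¹ +
        x • ((Umat N r s)ᴴ *
          (Hlin N (Ymat N a b U) w -
            x • (1 : Matrix (Fin N ⊕ Fin N) (Fin N ⊕ Fin N) ℂ))⁻¹ *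
          Umat N r s)) ∧
    (Umat N r s)ᴴ *
        (Hlin N (Ymat N (hatEntries N r a da) (hatEntries N s b db) U) w -
          x • (1 : Matrix (Fin N ⊕ Fin N) (Fin N ⊕ Fin N) ℂ))⁻¹ *
        Umat N r s =
      x⁻¹ • (Emat N r s hr hs da db *
        ((Dmat N r s hr hs da db)⁻¹ -
          (Dmat N r s hr hs da db)⁻¹ *
            ((Dmat N r s hr hs da db)⁻¹ +
              x • ((Umat N r s)ᴴ *
                (Hlin N (Ymat N a b U) w -
                  x • (1 : Matrix (Fin N ⊕ Fin N) (Fin N ⊕ Fin N) ℂ))⁻¹ *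
                Umat N r s))⁻¹ *
            (Dmat N r s hr hs da db)⁻¹) *
        Emat N r s hr hs da db) :=
  spiked_resolvent_identity_general N r s hr hs a b da db hda hdb U x w hx hw hev hev'
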